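/- arXiv:1011.5870 — 2 statements merged into one kernel-verified Lean document; each statement's English description precedes it below -/
import Mathlib

section
/- Let m, n, k, l be positive integers with km = ln, and let t be a positive integer. Then every m×n (0,1)-matrix A with exactly k 1s in each row and exactly l 1s in each column satisfies ρ_t(A) = min{tm, n}. -/
open scoped BigOperators

/-- The `t`-term rank of a matrix `A` with entries in `ℕ`: the largest number of 1s of `A`
(equivalently, the largest sum `σ(B)` over `(0,1)`-matrices `B ≤ A`) with at most one 1 in
each column and at most `t` 1s in each row. -/
noncomputable def tTermRank {α β : Type*} [Fintype α] [Fintype β] (t : ℕ)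
    (A : Matrix α β ℕ) : ℕ :=
  sSup {k : ℕ | ∃ B : Matrix α β ℕ,
    (∀ i j, B i j ≤ A i j) ∧ (∀ i, ∑ j, B i j ≤ t) ∧ (∀ j, ∑ i, B i j ≤ 1) ∧
    k = ∑ i, ∑ j, B i j}

/-!
The bound `ρ_t(A) ≤ min(tm, n)` holds for every matrix; the work is to attain it, by Hall's
theorem. Double counting the 1s of `A` that lie in a set `R` of rows gives
`k |R| ≤ l |N(R)|`, where `N(R)` is the set of columns in which these rows have a 1.
If `tm ≤ n` then `lt ≤ k`, so `t |R| ≤ |N(R)|`, and Hall's theorem for `t` copies of each row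
picks `t` 1s in every row, in pairwise distinct columns. If `n ≤ tm` then `k ≤ tl`, so the
same count for the transpose gives `|S| ≤ t |N(S)|` for every set `S` of columns, and Hall's
theorem for the columns against `t` copies of each row picks a 1 in every column, at most `t`
of them in each row.
-/

open Finset Function
open scoped Matrix

section tTermRank

variable {α β : Type*} [Fintype α] [Fintype β] {t : ℕ} {A : Matrix α β ℕ}

theorem sum_le_min_card {B : Matrix α β ℕ} (hBrow : ∀ i, ∑ j, B i j ≤ t)
    (hBcol : ∀ j, ∑ i, B i j ≤ 1) :
    ∑ i, ∑ j, B i j ≤ min (t * Fintype.card α) (Fintype.card β) := by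
  refine le_min ?_ ?_
  · simpa [mul_comm] using sum_le_sum fun i (_ : i ∈ univ) => hBrow i
  · refine sum_comm.trans_le ?_
    simpa using sum_le_sum fun j (_ : j ∈ univ) => hBcol j

theorem tTermRank_le_min : tTermRank t A ≤ min (t * Fintype.card α) (Fintype.card β) :=
  csSup_le' fun _ ⟨_, _, hBrow, hBcol, hc⟩ => hc ▸ sum_le_min_card hBrow hBcol

theorem sum_le_tTermRank {B : Matrix α β ℕ} (hBA : ∀ i j, B i j ≤ A i j)
    (hBrow : ∀ i, ∑ j, B i j ≤ t) (hBcol : ∀ j, ∑ i, B i j ≤ 1) :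
    ∑ i, ∑ j, B i j ≤ tTermRank t A :=
  le_csSup ⟨_, fun _ ⟨_, _, hBrow, hBcol, hc⟩ => hc ▸ sum_le_min_card hBrow hBcol⟩
    ⟨B, hBA, hBrow, hBcol, rfl⟩

theorem card_le_tTermRank {ι : Type*} [Fintype ι] [DecidableEq α] [DecidableEq β]
    {g : ι → α} {f : ι → β} (hf : Injective f) (hA : ∀ x, A (g x) (f x) = 1)
    (hg : ∀ i, #{x | g x = i} ≤ t) : Fintype.card ι ≤ tTermRank t A := by
  set B : Matrix α β ℕ := fun i j => #{x | g x = i ∧ f x = j}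
  have hrowB : ∀ i, ∑ j, B i j = #{x | g x = i} := fun i => by
    rw [card_eq_sum_card_fiberwise (f := f) (t := univ) fun _ _ => mem_coe.2 (mem_univ _)]
    simp only [B, filter_filter]
  have hcolB : ∀ j, ∑ i, B i j ≤ 1 := fun j => by
    have := card_eq_sum_card_fiberwise (s := {x | f x = j}) (f := g) (t := univ)
      fun _ _ => mem_coe.2 (mem_univ _)
    simp only [filter_filter, and_comm] at this
    rw [← this, card_le_one]
    intro x hx y hy
    exact hf ((mem_filter.1 hx).2.trans (mem_filter.1 hy).2.symm)
  have hBA : ∀ i j, B i j ≤ A i j := fun i j => by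
    obtain hB | ⟨x, hx⟩ := (B i j).eq_zero_or_pos.imp_right card_pos.1
    · exact hB ▸ Nat.zero_le _
    obtain ⟨rfl, rfl⟩ := (mem_filter.1 hx).2
    exact (hA x).symm ▸
      (single_le_sum (fun _ _ => Nat.zero_le _) (mem_univ (g x))).trans (hcolB (f x))
  have htotal : ∑ i, ∑ j, B i j = Fintype.card ι := by
    simp only [hrowB]
    rw [← card_univ,
      card_eq_sum_card_fiberwise (f := g) (t := univ) fun _ _ => mem_coe.2 (mem_univ _)]
  exact htotal ▸ sum_le_tTermRank hBA (fun i => (hrowB i).trans_le (hg i)) hcolB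

end tTermRank

namespace Matrix

variable {α β : Type*} {A : Matrix α β ℕ} {t : ℕ}

def rowOnes [Fintype β] (A : Matrix α β ℕ) (i : α) : Finset β := {j | A i j = 1}

theorem card_mul_le_card_biUnion_rowOnes [Fintype α] [Fintype β] [DecidableEq β] {k l : ℕ}
    (hA : ∀ i j, A i j ≤ 1) (hrow : ∀ i, k ≤ ∑ j, A i j)
    (hcol : ∀ j, ∑ i, A i j ≤ l) (R : Finset α) : k * #R ≤ l * #(R.biUnion A.rowOnes) := by
  set N := R.biUnion A.rowOnes
  have hrowN : ∀ i ∈ R, ∑ j, A i j = ∑ j ∈ N, A i j := fun i hi =>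
    (sum_subset (subset_univ N) fun j _ hj => by
      have : A i j ≠ 1 := fun h => hj (mem_biUnion.2 ⟨i, hi, by simp [rowOnes, h]⟩)
      have := hA i j
      omega).symm
  calc k * #R = ∑ _i ∈ R, k := by rw [sum_const, smul_eq_mul, mul_comm]
    _ ≤ ∑ i ∈ R, ∑ j ∈ N, A i j := sum_le_sum fun i hi => (hrow i).trans (hrowN i hi).le
    _ = ∑ j ∈ N, ∑ i ∈ R, A i j := sum_comm
    _ ≤ ∑ _j ∈ N, l :=
      sum_le_sum fun j _ => (sum_le_sum_of_subset (subset_univ R)).trans (hcol j)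
    _ = l * #N := by rw [sum_const, smul_eq_mul, mul_comm]

theorem exists_injective_mem_rowOnes [Fintype β] [DecidableEq β]
    (hall : ∀ R : Finset α, t * #R ≤ #(R.biUnion A.rowOnes)) :
    ∃ f : α × Fin t → β, Injective f ∧ ∀ x, A x.1 (f x) = 1 := by
  classical
  obtain ⟨f, hf, hfA⟩ := (all_card_le_biUnion_card_iff_exists_injective
    fun x : α × Fin t => A.rowOnes x.1).1 fun s => calc
      #s ≤ #(s.image Prod.fst ×ˢ (univ : Finset (Fin t))) :=
        card_le_card fun x hx => mem_product.2 ⟨mem_image_of_mem _ hx, mem_univ _⟩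
      _ = t * #(s.image Prod.fst) := by rw [card_product, card_fin, mul_comm]
      _ ≤ #((s.image Prod.fst).biUnion A.rowOnes) := hall _
      _ = #(s.biUnion fun x => A.rowOnes x.1) := by rw [image_biUnion]
  exact ⟨f, hf, fun x => (mem_filter.1 (hfA x)).2⟩

theorem exists_eq_one_card_fiber_le [Fintype α] [Fintype β] [DecidableEq α]
    (hall : ∀ S : Finset β, #S ≤ t * #(S.biUnion Aᵀ.rowOnes)) :
    ∃ g : β → α, (∀ j, A (g j) j = 1) ∧ ∀ i, #{j | g j = i} ≤ t := by
  obtain ⟨f, hf, hfA⟩ := (all_card_le_biUnion_card_iff_exists_injective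
    fun j => Aᵀ.rowOnes j ×ˢ (univ : Finset (Fin t))).1 fun S => by
      have : S.biUnion (fun j => Aᵀ.rowOnes j ×ˢ (univ : Finset (Fin t))) =
          S.biUnion Aᵀ.rowOnes ×ˢ univ := by
        ext; simp only [mem_biUnion, mem_product]; tauto
      rw [this, card_product, card_fin, mul_comm]
      exact hall S
  refine ⟨fun j => (f j).1, fun j => (mem_filter.1 (mem_product.1 (hfA j)).1).2, fun i => ?_⟩
  calc #{j | (f j).1 = i} ≤ #(univ : Finset (Fin t)) :=
        card_le_card_of_injOn (fun j => (f j).2) (fun _ _ => mem_coe.2 (mem_univ _))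
          fun a ha b hb hab =>
            hf (Prod.ext ((mem_filter.1 ha).2.trans (mem_filter.1 hb).2.symm) hab)
    _ = t := card_fin t

end Matrix

theorem t_term_rank_semiregular_general (m n k l t : ℕ)
    (hm : 0 < m) (hl : 0 < l)
    (hkl : k * m = l * n)
    (A : Matrix (Fin m) (Fin n) ℕ) (hA : ∀ i j, A i j ≤ 1)
    (hrow : ∀ i, ∑ j, A i j = k) (hcol : ∀ j, ∑ i, A i j = l) :
    tTermRank t A = min (t * m) n := by
  have hcountRows := Matrix.card_mul_le_card_biUnion_rowOnes hA
    (fun i => (hrow i).ge) (fun j => (hcol j).le)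
  have hcountCols := Matrix.card_mul_le_card_biUnion_rowOnes (A := Aᵀ) (fun i j => hA j i)
    (fun j => (hcol j).ge) (fun i => (hrow i).le)
  refine le_antisymm (by simpa using tTermRank_le_min (t := t) (A := A)) ?_
  rcases le_total (t * m) n with h | h
  · have hlt : l * t ≤ k := Nat.le_of_mul_le_mul_right (by nlinarith) hm
    obtain ⟨f, hf, hfA⟩ := Matrix.exists_injective_mem_rowOnes (A := A) (t := t) fun R =>
      Nat.le_of_mul_le_mul_left (by nlinarith [hcountRows R]) hl
    have hfiber (i : Fin m) : #{x : Fin m × Fin t | x.1 = i} ≤ t := by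
      have : ({x : Fin m × Fin t | x.1 = i} : Finset _) = {i} ×ˢ univ := by
        ext ⟨a, b⟩; simp [eq_comm]
      simp [this]
    rw [min_eq_left h]
    simpa [mul_comm] using card_le_tTermRank hf hfA hfiber
  · have hkt : k ≤ t * l := Nat.le_of_mul_le_mul_right (by nlinarith) hm
    obtain ⟨g, hgA, hg⟩ := Matrix.exists_eq_one_card_fiber_le (A := A) (t := t) fun S =>
      Nat.le_of_mul_le_mul_left (by nlinarith [hcountCols S]) hl
    rw [min_eq_right h]
    simpa using card_le_tTermRank (f := id) injective_id hgA hg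

/-- The `t`-term rank of every semiregular `m×n` (0,1)-matrix (with exactly `k` 1s in
each row and exactly `l` 1s in each column, where `km = ln`) equals `min(tm, n)`. -/
theorem t_term_rank_semiregular (m n k l t : ℕ)
    (hm : 0 < m) (hn : 0 < n) (hk : 0 < k) (hl : 0 < l) (ht : 0 < t)
    (hkl : k * m = l * n)
    (A : Matrix (Fin m) (Fin n) ℕ) (hA : ∀ i j, A i j ≤ 1)
    (hrow : ∀ i, ∑ j, A i j = k) (hcol : ∀ j, ∑ i, A i j = l) :
    tTermRank t A = min (t * m) n :=
  t_term_rank_semiregular_general m n k l t hm hl hkl A hA hrow hcol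
end

section
/- Let m, n, k, l be positive integers with km = ln and m ≤ n. Then every m×n (0,1)-matrix A with exactly k 1s in each row and exactly l 1s in each column has strength γ(A) = ⌈n/m⌉. -/
open scoped BigOperators

/-- The strength `γ(A)` of a (0,1)-matrix `A`: the smallest positive integer `t` such
that `ρ_t(A)` equals the number of columns of `A`. -/
noncomputable def strength {α β : Type*} [Fintype α] [Fintype β] (A : Matrix α β ℕ) : ℕ :=
  sInf {t : ℕ | 0 < t ∧ tTermRank t A = Fintype.card β}

/-!
By Hall's theorem, applied to the columns and `t` copies of each row, `ρ_t(A) = n` as soon as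
every set `S` of columns has nonzero entries in at least `|S| / t` rows. Double counting the
entries of `A` in the columns of `S` bounds `|S|` by `(k / l) |N(S)| = (n / m) |N(S)|`, where
`N(S)` is the set of those rows, so `t = ⌈n/m⌉` suffices. Conversely `ρ_t(A) ≤ t m`, so
`ρ_t(A) = n` forces `t ≥ n / m`.
-/

open Finset

lemma card_filter_fst_eq_le {α β γ : Type*} [Fintype β] [Fintype γ] [DecidableEq α]
    {f : β → α × γ} (hf : Function.Injective f) (i : α) :
    #{j | (f j).1 = i} ≤ Fintype.card γ :=
  card_le_card_of_injOn (fun j => (f j).2) (fun _ _ => mem_univ _) fun _ ha _ hb hab =>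
    hf (Prod.ext ((mem_filter.1 ha).2.trans (mem_filter.1 hb).2.symm) hab)

section TTermRank

variable {α β : Type*} [Fintype α] [Fintype β]

def colSupport (A : Matrix α β ℕ) (j : β) : Finset α := {i | A i j ≠ 0}

lemma sum_sum_le_card_of_col_sum_le_one {B : Matrix α β ℕ} (hB : ∀ j, ∑ i, B i j ≤ 1) :
    ∑ i, ∑ j, B i j ≤ Fintype.card β := by
  rw [show ∑ i, ∑ j, B i j = ∑ j, ∑ i, B i j from sum_comm]
  simpa using sum_le_sum fun j (_ : j ∈ univ) => hB j

lemma bddAbove_tTermRank_set (t : ℕ) (A : Matrix α β ℕ) :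
    BddAbove {k : ℕ | ∃ B : Matrix α β ℕ,
      (∀ i j, B i j ≤ A i j) ∧ (∀ i, ∑ j, B i j ≤ t) ∧ (∀ j, ∑ i, B i j ≤ 1) ∧
      k = ∑ i, ∑ j, B i j} :=
  ⟨Fintype.card β, by
    rintro _ ⟨B, -, -, hB, rfl⟩
    exact sum_sum_le_card_of_col_sum_le_one hB⟩

lemma exists_eq_tTermRank (t : ℕ) (A : Matrix α β ℕ) :
    ∃ B : Matrix α β ℕ, (∀ i j, B i j ≤ A i j) ∧ (∀ i, ∑ j, B i j ≤ t) ∧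
      (∀ j, ∑ i, B i j ≤ 1) ∧ tTermRank t A = ∑ i, ∑ j, B i j :=
  Nat.sSup_mem (by exact ⟨0, 0, fun _ _ => Nat.zero_le _, by simp, by simp, by simp⟩)
    (bddAbove_tTermRank_set t A)

lemma sum_sum_le_tTermRank {t : ℕ} {A B : Matrix α β ℕ} (hBA : ∀ i j, B i j ≤ A i j)
    (hrow : ∀ i, ∑ j, B i j ≤ t) (hcol : ∀ j, ∑ i, B i j ≤ 1) :
    ∑ i, ∑ j, B i j ≤ tTermRank t A :=
  le_csSup (bddAbove_tTermRank_set t A) ⟨B, hBA, hrow, hcol, rfl⟩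

lemma tTermRank_le_card (t : ℕ) (A : Matrix α β ℕ) : tTermRank t A ≤ Fintype.card β := by
  obtain ⟨B, -, -, hcol, hB⟩ := exists_eq_tTermRank t A
  exact hB ▸ sum_sum_le_card_of_col_sum_le_one hcol

lemma card_le_mul_card_of_tTermRank_eq_card {t : ℕ} {A : Matrix α β ℕ}
    (h : tTermRank t A = Fintype.card β) : Fintype.card β ≤ t * Fintype.card α := by
  obtain ⟨B, -, hrow, -, hB⟩ := exists_eq_tTermRank t A
  calc Fintype.card β = ∑ i, ∑ j, B i j := h ▸ hB
    _ ≤ ∑ _i : α, t := sum_le_sum fun i _ => hrow i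
    _ = t * Fintype.card α := by simp [mul_comm]

lemma tTermRank_eq_card_of_injective {t : ℕ} {A : Matrix α β ℕ} {f : β → α × Fin t}
    (hf : Function.Injective f) (hfA : ∀ j, A (f j).1 j ≠ 0) :
    tTermRank t A = Fintype.card β := by
  classical
  let B : Matrix α β ℕ := fun i j => if (f j).1 = i then 1 else 0
  have hcol : ∀ j, ∑ i, B i j = 1 := fun j => by simp [B]
  refine le_antisymm (tTermRank_le_card t A) ?_
  calc Fintype.card β = ∑ i, ∑ j, B i j := by rw [sum_comm]; simp
    _ ≤ tTermRank t A := sum_sum_le_tTermRank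
        (fun i j => by
          by_cases hij : (f j).1 = i
          · simpa [B, hij, Nat.one_le_iff_ne_zero] using hij ▸ hfA j
          · simp [B, hij])
        (fun i => by simpa [B, sum_boole] using card_filter_fst_eq_le hf i)
        (fun j => (hcol j).le)

lemma tTermRank_eq_card_of_forall_card_le {t : ℕ} {A : Matrix α β ℕ} [DecidableEq α]
    (hS : ∀ S : Finset β, #S ≤ t * #(S.biUnion (colSupport A))) :
    tTermRank t A = Fintype.card β := by
  obtain ⟨f, hf, hfA⟩ := (all_card_le_biUnion_card_iff_exists_injective
    fun j => colSupport A j ×ˢ (univ : Finset (Fin t))).1 fun S => by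
      have hN : S.biUnion (fun j => colSupport A j ×ˢ univ) =
          S.biUnion (colSupport A) ×ˢ (univ : Finset (Fin t)) := by
        ext; simp
      rw [hN, card_product, card_univ, Fintype.card_fin, mul_comm]
      exact hS S
  exact tTermRank_eq_card_of_injective hf fun j => by
    simpa [colSupport] using (mem_product.1 (hfA j)).1

lemma mul_card_le_mul_card_biUnion_colSupport [DecidableEq α] {k l : ℕ} {A : Matrix α β ℕ}
    (hrow : ∀ i, ∑ j, A i j ≤ k) (hcol : ∀ j, l ≤ ∑ i, A i j) (S : Finset β) :
    l * #S ≤ k * #(S.biUnion (colSupport A)) := by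
  set N := S.biUnion (colSupport A)
  have hsupp : ∀ j ∈ S, ∑ i ∈ N, A i j = ∑ i, A i j := fun j hj =>
    sum_subset (subset_univ N) fun i _ hiN => by
      by_contra hne
      exact hiN (mem_biUnion.2 ⟨j, hj, by simpa [colSupport] using hne⟩)
  calc l * #S = ∑ _j ∈ S, l := by rw [sum_const, smul_eq_mul, mul_comm]
    _ ≤ ∑ j ∈ S, ∑ i ∈ N, A i j := sum_le_sum fun j hj => hsupp j hj ▸ hcol j
    _ = ∑ i ∈ N, ∑ j ∈ S, A i j := sum_comm
    _ ≤ ∑ i ∈ N, ∑ j, A i j := sum_le_sum fun i _ => sum_le_sum_of_subset (subset_univ S)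
    _ ≤ ∑ _i ∈ N, k := sum_le_sum fun i _ => hrow i
    _ = k * #N := by rw [sum_const, smul_eq_mul, mul_comm]

lemma tTermRank_eq_card_of_row_sum_le_of_le_col_sum {t k l : ℕ} {A : Matrix α β ℕ}
    (hl : 0 < l) (hkt : k ≤ t * l)
    (hrow : ∀ i, ∑ j, A i j ≤ k) (hcol : ∀ j, l ≤ ∑ i, A i j) :
    tTermRank t A = Fintype.card β := by
  classical
  refine tTermRank_eq_card_of_forall_card_le fun S => Nat.le_of_mul_le_mul_left ?_ hl
  calc l * #S ≤ k * #(S.biUnion (colSupport A)) :=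
        mul_card_le_mul_card_biUnion_colSupport hrow hcol S
    _ ≤ t * l * #(S.biUnion (colSupport A)) := Nat.mul_le_mul_right _ hkt
    _ = l * (t * #(S.biUnion (colSupport A))) := by ring

lemma strength_eq_of_forall_tTermRank_eq_card_iff {A : Matrix α β ℕ} {T : ℕ} (hT : 0 < T)
    (h : ∀ t, tTermRank t A = Fintype.card β ↔ T ≤ t) : strength A = T :=
  le_antisymm (Nat.sInf_le ⟨hT, (h T).2 le_rfl⟩)
    (le_csInf ⟨T, hT, (h T).2 le_rfl⟩ fun _ ht => (h _).1 ht.2)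

end TTermRank

theorem strength_semiregular_general (m n k l : ℕ)
    (hm : 0 < m) (hn : 0 < n) (hl : 0 < l)
    (hkl : k * m = l * n)
    (A : Matrix (Fin m) (Fin n) ℕ)
    (hrow : ∀ i, ∑ j, A i j = k) (hcol : ∀ j, ∑ i, A i j = l) :
    strength A = (n + m - 1) / m := by
  have hceil (t : ℕ) : n ⌈/⌉ m ≤ t ↔ n ≤ t * m := by
    rw [ceilDiv_le_iff_le_mul hm, mul_comm]
  rw [← Nat.ceilDiv_eq_add_pred_div]
  refine strength_eq_of_forall_tTermRank_eq_card_iff ?_ fun t => ?_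
  · exact Nat.pos_of_ne_zero fun h => by simpa [h, Nat.pos_iff_ne_zero.1 hn] using hceil 0
  rw [hceil]
  constructor
  · simpa using card_le_mul_card_of_tTermRank_eq_card (t := t) (A := A)
  · intro ht
    have hkt : k ≤ t * l := by
      refine Nat.le_of_mul_le_mul_right ?_ hm
      calc k * m = l * n := hkl
        _ ≤ l * (t * m) := Nat.mul_le_mul_left l ht
        _ = t * l * m := by ring
    simpa using tTermRank_eq_card_of_row_sum_le_of_le_col_sum hl hkt
      (fun i => (hrow i).le) (fun j => (hcol j).ge)

/-- Every semiregular `m×n` (0,1)-matrix with `m ≤ n` (exactly `k` 1s in each row and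
exactly `l` 1s in each column, `km = ln`) has strength `⌈n/m⌉`. -/
theorem strength_semiregular (m n k l : ℕ)
    (hm : 0 < m) (hn : 0 < n) (hk : 0 < k) (hl : 0 < l)
    (hkl : k * m = l * n) (hmn : m ≤ n)
    (A : Matrix (Fin m) (Fin n) ℕ) (hA : ∀ i j, A i j ≤ 1)
    (hrow : ∀ i, ∑ j, A i j = k) (hcol : ∀ j, ∑ i, A i j = l) :
    strength A = (n + m - 1) / m :=
  strength_semiregular_general m n k l hm hn hl hkl A hrow hcol
end
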